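/- arXiv:2310.02767 — 2 statements merged into one kernel-verified Lean document; each statement's English description precedes it below -/
import Mathlib

section
/- Let H be a real Hilbert space, (Ω, 𝔽, P) a probability space, and (V_i)_{i≥1} a sequence of H-valued random variables that are Bochner square-integrable (E‖V_i‖² < ∞ for each i). Suppose there exists a constant B < ∞ such that for every i ≥ 1, ∑_{k=0}^∞ |E⟨V_i − E V_i, V_{i+k} − E V_{i+k}⟩| ≤ B. Then for every integer t ≥ 1, E‖(1/t) ∑_{i=1}^t (V_i − E V_i)‖² ≤ 2B/t, and consequently E‖(1/t) ∑_{i=1}^t (V_i − E V_i)‖ ≤ √(2B/t). -/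
/-!
Write `W i = V i - E[V i]` and `c i j = E⟪W i, W j⟫`. Expanding the square gives
`E‖∑_{i ≤ t} W i‖² = ∑_{i,j ≤ t} c i j`; since `c` is symmetric this is at most
`2 ∑_i ∑_{j ≥ i} |c i j|`, and every row `∑_{j ≥ i} |c i j|` is a partial sum of the series
bounded by `B`. Hence `E‖∑ W i‖² ≤ 2tB`, and dividing by `t²` gives the first bound.
The second follows from `(E X)² ≤ E X²`, i.e. nonnegativity of the variance of `X = ‖·‖`.
-/

open MeasureTheory Finset
open scoped RealInnerProductSpace

theorem sum_filter_le_le_tsum_add {s : Finset ℕ} {g : ℕ → ℝ} (hg : ∀ k, 0 ≤ g k) (i : ℕ)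
    (hsum : Summable fun k => g (i + k)) :
    ∑ j ∈ s with i ≤ j, g j ≤ ∑' k, g (i + k) := by
  rw [← sum_preimage (i + ·) _ (add_right_injective i).injOn g]
  · exact hsum.sum_le_tsum _ fun k _ => hg _
  · intro j hj hj_range
    exact absurd ⟨j - i, Nat.add_sub_cancel' (mem_filter.mp hj).2⟩ hj_range

section SymmetricSums

variable {ι : Type*} [LinearOrder ι] (s : Finset ι) {c : ι → ι → ℝ}

theorem sum_sum_le_two_mul_sum_sum_filter_le_abs (hc : ∀ i j, c i j = c j i) :
    ∑ i ∈ s, ∑ j ∈ s, c i j ≤ 2 * ∑ i ∈ s, ∑ j ∈ s with i ≤ j, |c i j| := by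
  set A : ι → ι → ℝ := fun i j => if i ≤ j then |c i j| else 0
  have hA : ∀ i j, c i j ≤ A i j + A j i := by
    intro i j
    rcases le_total i j with h | h <;> simp only [A, h, if_true, hc j i] <;> split_ifs <;>
      linarith [le_abs_self (c i j), abs_nonneg (c i j)]
  calc ∑ i ∈ s, ∑ j ∈ s, c i j ≤ ∑ i ∈ s, ∑ j ∈ s, (A i j + A j i) := by
        gcongr with i _ j _
        exact hA i j
    _ = 2 * ∑ i ∈ s, ∑ j ∈ s, A i j := by
      simp only [sum_add_distrib, two_mul]
      rw [sum_comm (f := fun i j => A j i)]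
    _ = 2 * ∑ i ∈ s, ∑ j ∈ s with i ≤ j, |c i j| := by simp only [A, sum_filter]

theorem sum_sum_le_two_mul_card_mul_of_row_le (hc : ∀ i j, c i j = c j i) {B : ℝ}
    (hrow : ∀ i ∈ s, ∑ j ∈ s with i ≤ j, |c i j| ≤ B) :
    ∑ i ∈ s, ∑ j ∈ s, c i j ≤ 2 * (#s * B) := by
  calc ∑ i ∈ s, ∑ j ∈ s, c i j ≤ 2 * ∑ i ∈ s, ∑ j ∈ s with i ≤ j, |c i j| :=
        sum_sum_le_two_mul_sum_sum_filter_le_abs s hc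
    _ ≤ 2 * (#s * B) := by grw [sum_le_card_nsmul s _ B hrow, nsmul_eq_mul]

end SymmetricSums

section SecondMoments

variable {Ω : Type*} [MeasurableSpace Ω] {P : Measure Ω}

theorem integral_norm_le_sqrt_integral_norm_sq [IsProbabilityMeasure P]
    {E : Type*} [NormedAddCommGroup E] {f : Ω → E} (hf : MemLp f 2 P) :
    ∫ ω, ‖f ω‖ ∂P ≤ √(∫ ω, ‖f ω‖ ^ 2 ∂P) := by
  have hvar := ProbabilityTheory.variance_nonneg (fun ω => ‖f ω‖) P
  rw [ProbabilityTheory.variance_eq_sub hf.norm] at hvar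
  exact (le_abs_self _).trans (Real.abs_le_sqrt (sub_nonneg.mp hvar))

variable {H : Type*} [NormedAddCommGroup H] [InnerProductSpace ℝ H]

theorem MeasureTheory.MemLp.integrable_inner {f g : Ω → H} (hf : MemLp f 2 P)
    (hg : MemLp g 2 P) :
    Integrable (fun ω => ⟪f ω, g ω⟫) P := by
  refine (L2.integrable_inner (𝕜 := ℝ) (hf.toLp f) (hg.toLp g)).congr ?_
  filter_upwards [hf.coeFn_toLp, hg.coeFn_toLp] with ω hfω hgω
  rw [hfω, hgω]

theorem integral_norm_sum_sq {ι : Type*} {s : Finset ι} {X : ι → Ω → H}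
    (hX : ∀ i ∈ s, MemLp (X i) 2 P) :
    ∫ ω, ‖∑ i ∈ s, X i ω‖ ^ 2 ∂P = ∑ i ∈ s, ∑ j ∈ s, ∫ ω, ⟪X i ω, X j ω⟫ ∂P := by
  have hint : ∀ i ∈ s, ∀ j ∈ s, Integrable (fun ω => ⟪X i ω, X j ω⟫) P :=
    fun i hi j hj => (hX i hi).integrable_inner (hX j hj)
  simp_rw [← real_inner_self_eq_norm_sq, sum_inner, inner_sum]
  rw [integral_finsetSum _ fun i hi => integrable_finsetSum _ (hint i hi)]
  exact sum_congr rfl fun i hi => integral_finsetSum _ (hint i hi)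

theorem integral_norm_sum_sq_le {s : Finset ℕ} {X : ℕ → Ω → H}
    (hX : ∀ i ∈ s, MemLp (X i) 2 P) {B : ℝ}
    (hsum : ∀ i ∈ s, Summable fun k => |∫ ω, ⟪X i ω, X (i + k) ω⟫ ∂P|)
    (hB : ∀ i ∈ s, ∑' k, |∫ ω, ⟪X i ω, X (i + k) ω⟫ ∂P| ≤ B) :
    ∫ ω, ‖∑ i ∈ s, X i ω‖ ^ 2 ∂P ≤ 2 * (#s * B) := by
  rw [integral_norm_sum_sq hX]
  have hc : ∀ i j, ∫ ω, ⟪X i ω, X j ω⟫ ∂P = ∫ ω, ⟪X j ω, X i ω⟫ ∂P :=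
    fun i j => integral_congr_ae (ae_of_all _ fun ω => real_inner_comm _ _)
  have hrow : ∀ i ∈ s, ∑ j ∈ s with i ≤ j, |∫ ω, ⟪X i ω, X j ω⟫ ∂P| ≤ B := fun i hi =>
    (sum_filter_le_le_tsum_add (g := fun j => |∫ ω, ⟪X i ω, X j ω⟫ ∂P|)
      (fun _ => abs_nonneg _) i (hsum i hi)).trans (hB i hi)
  exact sum_sum_le_two_mul_card_mul_of_row_le s hc hrow

end SecondMoments

theorem hilbert_valued_average_bound_of_summable_cov_general
    {Ω : Type*} [MeasurableSpace Ω] (P : Measure Ω) [IsProbabilityMeasure P]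
    {H : Type*} [NormedAddCommGroup H] [InnerProductSpace ℝ H]
    (V : ℕ → Ω → H) (hV : ∀ i, 1 ≤ i → MemLp (V i) 2 P)
    (B : ℝ)
    (hSummable : ∀ i, 1 ≤ i → Summable (fun k : ℕ =>
      |∫ ω, inner (𝕜 := ℝ)
        (V i ω - ∫ ω', V i ω' ∂P) (V (i + k) ω - ∫ ω', V (i + k) ω' ∂P) ∂P|))
    (hB : ∀ i, 1 ≤ i → ∑' k : ℕ,
      |∫ ω, inner (𝕜 := ℝ)
        (V i ω - ∫ ω', V i ω' ∂P) (V (i + k) ω - ∫ ω', V (i + k) ω' ∂P) ∂P| ≤ B)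
    (t : ℕ) :
    (∫ ω, ‖(1 / (t : ℝ)) • ∑ i ∈ Finset.Icc 1 t, (V i ω - ∫ ω', V i ω' ∂P)‖ ^ 2 ∂P
        ≤ 2 * B / t) ∧
      (∫ ω, ‖(1 / (t : ℝ)) • ∑ i ∈ Finset.Icc 1 t, (V i ω - ∫ ω', V i ω' ∂P)‖ ∂P
        ≤ Real.sqrt (2 * B / t)) := by
  have hW : ∀ i ∈ Icc 1 t, MemLp (fun ω => V i ω - ∫ ω', V i ω' ∂P) 2 P :=
    fun i hi => (hV i (mem_Icc.1 hi).1).sub (memLp_const _)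
  have hsum : ∫ ω, ‖∑ i ∈ Icc 1 t, (V i ω - ∫ ω', V i ω' ∂P)‖ ^ 2 ∂P ≤ 2 * (t * B) := by
    simpa only [Nat.card_Icc, add_tsub_cancel_right] using
      integral_norm_sum_sq_le hW (fun i hi => hSummable i (mem_Icc.1 hi).1)
        (fun i hi => hB i (mem_Icc.1 hi).1)
  have hsq : ∫ ω, ‖(1 / (t : ℝ)) • ∑ i ∈ Icc 1 t, (V i ω - ∫ ω', V i ω' ∂P)‖ ^ 2 ∂P
      ≤ 2 * B / t := by
    simp_rw [norm_smul, mul_pow]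
    rw [integral_const_mul]
    calc _ ≤ ‖1 / (t : ℝ)‖ ^ 2 * (2 * (t * B)) := by gcongr
      _ = 2 * B / t := by
        rcases eq_or_ne (t : ℝ) 0 with ht | ht
        · simp [ht]
        · rw [norm_div, norm_one, Real.norm_natCast]
          field_simp
  exact ⟨hsq, (integral_norm_le_sqrt_integral_norm_sq
    ((memLp_finsetSum _ hW).const_smul _)).trans (Real.sqrt_le_sqrt hsq)⟩

theorem hilbert_valued_average_bound_of_summable_cov
    {Ω : Type*} [MeasurableSpace Ω] (P : Measure Ω) [IsProbabilityMeasure P]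
    {H : Type*} [NormedAddCommGroup H] [InnerProductSpace ℝ H]
    (V : ℕ → Ω → H) (hV : ∀ i, 1 ≤ i → MemLp (V i) 2 P)
    (B : ℝ)
    (hSummable : ∀ i, 1 ≤ i → Summable (fun k : ℕ =>
      |∫ ω, inner (𝕜 := ℝ)
        (V i ω - ∫ ω', V i ω' ∂P) (V (i + k) ω - ∫ ω', V (i + k) ω' ∂P) ∂P|))
    (hB : ∀ i, 1 ≤ i → ∑' k : ℕ,
      |∫ ω, inner (𝕜 := ℝ)
        (V i ω - ∫ ω', V i ω' ∂P) (V (i + k) ω - ∫ ω', V (i + k) ω' ∂P) ∂P| ≤ B)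
    (t : ℕ) (ht : 1 ≤ t) :
    (∫ ω, ‖(1 / (t : ℝ)) • ∑ i ∈ Finset.Icc 1 t, (V i ω - ∫ ω', V i ω' ∂P)‖ ^ 2 ∂P
        ≤ 2 * B / t) ∧
      (∫ ω, ‖(1 / (t : ℝ)) • ∑ i ∈ Finset.Icc 1 t, (V i ω - ∫ ω', V i ω' ∂P)‖ ∂P
        ≤ Real.sqrt (2 * B / t)) :=
  hilbert_valued_average_bound_of_summable_cov_general P V hV B hSummable hB t
end

section
/- Let H be a real Hilbert space, γ > 0, μ ∈ H, and T : H → H a continuous self-adjoint linear operator satisfying ⟨T x, x⟩ ≥ 0 for all x ∈ H. Then T + γI is bijective and the element m = (T + γI)⁻¹ T μ is the unique minimizer over H of the functional f ↦ ⟨T(f − μ), f − μ⟩ + γ‖f‖²; equivalently, m is the unique element of H satisfying γ m = T(μ − m). -/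
/-!
With `A = T + γ I`, positivity of `T` gives `⟪A x, x⟫ ≥ γ ‖x‖²`, so `A` is invertible by the
Lax–Milgram argument. Writing `J` for the objective and `f = m + d`, symmetry of `T` gives
`J f = J m + 2 ⟪T (m - μ) + γ m, d⟫ + ⟪T d, d⟫ + γ ‖d‖²`; the cross term vanishes exactly when
`A m = T μ`, and the remaining terms are nonnegative and vanish only at `d = 0`.
-/

open scoped InnerProductSpace NNReal

namespace ContinuousLinearMap

variable {H : Type*} [NormedAddCommGroup H] [InnerProductSpace ℝ H]

lemma inner_add_smul_apply_self (T : H →L[ℝ] H) (γ : ℝ) (x : H) :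
    ⟪T x + γ • x, x⟫_ℝ = ⟪T x, x⟫_ℝ + γ * ‖x‖ ^ 2 := by
  rw [inner_add_left, real_inner_smul_left, real_inner_self_eq_norm_sq]

lemma bijective_add_smul_of_nonneg_inner [CompleteSpace H] {T : H →L[ℝ] H}
    (hpos : ∀ x, 0 ≤ ⟪T x, x⟫_ℝ) {γ : ℝ} (hγ : 0 < γ) :
    Function.Bijective fun x ↦ T x + γ • x := by
  have hcoercive : ∀ x, ‖x‖ ^ 2 * (⟨γ, hγ.le⟩ : ℝ≥0) ≤ ‖⟪(T + γ • 1) x, x⟫_ℝ‖ := fun x ↦ by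
    change ‖x‖ ^ 2 * γ ≤ |⟪T x + γ • x, x⟫_ℝ|
    have hγx : 0 ≤ γ * ‖x‖ ^ 2 := by positivity
    rw [inner_add_smul_apply_self, abs_of_nonneg (add_nonneg (hpos x) hγx)]
    linarith [hpos x]
  exact isUnit_iff_bijective.mp
    (isUnit_of_forall_le_norm_inner_map _ (c := ⟨γ, hγ.le⟩) hγ hcoercive)

lemma inner_map_add_add_self {T : H →L[ℝ] H} (hT : (T : H →ₗ[ℝ] H).IsSymmetric) (a b : H) :
    ⟪T (a + b), a + b⟫_ℝ = ⟪T a, a⟫_ℝ + 2 * ⟪T a, b⟫_ℝ + ⟪T b, b⟫_ℝ := by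
  have hba : ⟪T b, a⟫_ℝ = ⟪T a, b⟫_ℝ := by
    rw [real_inner_comm]; exact (hT a b).symm
  rw [map_add, inner_add_left, inner_add_right, inner_add_right, hba]
  ring

end ContinuousLinearMap

open ContinuousLinearMap

section

variable {H : Type*} [NormedAddCommGroup H] [InnerProductSpace ℝ H]

def regularizedObjective (T : H →L[ℝ] H) (γ : ℝ) (μ f : H) : ℝ :=
  ⟪T (f - μ), f - μ⟫_ℝ + γ * ‖f‖ ^ 2

variable {T : H →L[ℝ] H} {γ : ℝ} {μ m : H}

lemma regularizedObjective_eq_add (hT : (T : H →ₗ[ℝ] H).IsSymmetric)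
    (hm : T m + γ • m = T μ) (f : H) :
    regularizedObjective T γ μ f =
      regularizedObjective T γ μ m + (⟪T (f - m), f - m⟫_ℝ + γ * ‖f - m‖ ^ 2) := by
  have hcross : ⟪T (m - μ), f - m⟫_ℝ + γ * ⟪m, f - m⟫_ℝ = 0 := by
    rw [← real_inner_smul_left, ← inner_add_left, map_sub, sub_add_eq_add_sub, hm, sub_self,
      inner_zero_left]
  have hquad := inner_map_add_add_self hT (m - μ) (f - m)
  have hnorm := norm_add_sq_real m (f - m)
  rw [sub_add_sub_cancel'] at hquad
  rw [add_sub_cancel] at hnorm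
  unfold regularizedObjective
  linear_combination hquad + γ * hnorm + 2 * hcross

lemma regularizedObjective_le (hT : (T : H →ₗ[ℝ] H).IsSymmetric)
    (hpos : ∀ x, 0 ≤ ⟪T x, x⟫_ℝ) (hγ : 0 ≤ γ) (hm : T m + γ • m = T μ) (f : H) :
    regularizedObjective T γ μ m ≤ regularizedObjective T γ μ f := by
  rw [regularizedObjective_eq_add hT hm f]
  have hTd := hpos (f - m)
  have hγd : 0 ≤ γ * ‖f - m‖ ^ 2 := by positivity
  linarith

lemma eq_of_regularizedObjective_le (hT : (T : H →ₗ[ℝ] H).IsSymmetric)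
    (hpos : ∀ x, 0 ≤ ⟪T x, x⟫_ℝ) (hγ : 0 < γ) (hm : T m + γ • m = T μ) {m' : H}
    (hm' : regularizedObjective T γ μ m' ≤ regularizedObjective T γ μ m) : m' = m := by
  rw [regularizedObjective_eq_add hT hm m'] at hm'
  have hTd := hpos (m' - m)
  have hnorm : ‖m' - m‖ ^ 2 ≤ 0 := by nlinarith
  rwa [sq_nonpos_iff, norm_eq_zero, sub_eq_zero] at hnorm

lemma smul_eq_map_sub_iff : γ • m = T (μ - m) ↔ T m + γ • m = T μ := by
  rw [map_sub, eq_sub_iff_add_eq, add_comm]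

end

theorem regularized_quadratic_unique_minimizer
    {H : Type*} [NormedAddCommGroup H] [InnerProductSpace ℝ H] [CompleteSpace H]
    (γ : ℝ) (hγ : 0 < γ) (μ : H) (T : H →L[ℝ] H)
    (hsa : ∀ x y : H, inner (𝕜 := ℝ) (T x) y = inner (𝕜 := ℝ) x (T y))
    (hpos : ∀ x : H, 0 ≤ inner (𝕜 := ℝ) (T x) x) :
    Function.Bijective (fun x : H => T x + γ • x) ∧
      ∀ m : H, T m + γ • m = T μ →
        ((∀ f : H,
            inner (𝕜 := ℝ) (T (m - μ)) (m - μ) + γ * ‖m‖ ^ 2 ≤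
              inner (𝕜 := ℝ) (T (f - μ)) (f - μ) + γ * ‖f‖ ^ 2) ∧
          (∀ m' : H,
            (∀ f : H,
              inner (𝕜 := ℝ) (T (m' - μ)) (m' - μ) + γ * ‖m'‖ ^ 2 ≤
                inner (𝕜 := ℝ) (T (f - μ)) (f - μ) + γ * ‖f‖ ^ 2) → m' = m)) ∧
        (γ • m = T (μ - m) ∧ ∀ m' : H, γ • m' = T (μ - m') → m' = m) := by
  have hbij := bijective_add_smul_of_nonneg_inner hpos hγ
  refine ⟨hbij, fun m hm ↦ ⟨⟨regularizedObjective_le hsa hpos hγ.le hm,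
    fun m' hm' ↦ eq_of_regularizedObjective_le hsa hpos hγ hm (hm' m)⟩,
    smul_eq_map_sub_iff.mpr hm, fun m' hm' ↦ hbij.1 ?_⟩⟩
  exact (smul_eq_map_sub_iff.mp hm').trans hm.symm
end
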